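/- Fix $c>0$ (playing the role of $\varsigma(m_x)\|\nu^\varphi\|_\varphi>0$), a skew-symmetric invertible real matrix $Z$ of size $2n\times 2n$ (representing $S_{\nu^\varphi}$ on $\mathfrak{t}^{\perp_\varphi}$), a vector $\xi'$ and a smooth $\mathbb{R}$-valued function $R_2$ vanishing to second order at the origin, and consider the phase $\Upsilon_{x,\xi'}(u,s,\xi'',\gamma)=s\,(u\,\varsigma(m_x)-1)\,\|\nu^\varphi\|_\varphi-\gamma^t Z\,\xi''+R_2(\gamma)^t(s\,\nu^\varphi_u+\xi'+\xi'')$ for $u>0$, $s\in\mathbb{R}$, $\xi''\in\mathbb{R}^{2n}$, and $\gamma$ in a sufficiently small neighborhood of $0$ in $\mathbb{R}^{2n}$. Then: (i) $\Upsilon_{x,\xi'}$ has the unique critical point $P_0=(1/\varsigma(m_x),0,\mathbf{0},\mathbf{0})$, at which it vanishes; (ii) the Hessian at $P_0$ is the symmetric block matrix with $(1,2)$ and $(2,1)$ entries $\varsigma(m_x)\|\nu^\varphi\|_\varphi$, blocks $(3,4)=Z$, $(4,3)=-Z$, block $(4,4)=\partial^2_{\gamma\gamma}\Upsilon_{x,\xi'}|_{P_0}$,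 and zeros elsewhere; (iii) its determinant is $-\varsigma(m_x)^2\|\nu^\varphi\|_\varphi^2\det(Z)^2$ and its signature is $0$; in particular $P_0$ is a non-degenerate critical point. -/

import Mathlib

/-!
Statement 19 (Lemma 6.7 of the paper: the critical point analysis of the phase
arising in the near-diagonal scaling asymptotics).

With `c = ς(m_x)‖ν^φ‖_φ > 0` (here written `ς * nrm`), `Z` the skew-symmetric
invertible `2n × 2n` matrix representing `S_{ν^φ}` on `𝔱^{⊥_φ}`, `a = ν^φ_u`,
`b = ξ'`, `emb` the inclusion `𝔱^{⊥_φ} ↪ 𝔤`, and `R2 : 𝔱^{⊥_φ} → 𝔤` smooth and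
vanishing to second order at the origin, the phase is
`Υ_{x,ξ'}(u,s,ξ'',γ) = s(uς - 1)‖ν^φ‖ - γᵀZξ'' + R2(γ)ᵀ(s ν^φ_u + ξ' + ξ'')`.
The claims: (i) on `u > 0` and `γ` in a sufficiently small neighbourhood of `0`,
the unique critical point is `P₀ = (1/ς, 0, 0, 0)`, at which `Υ` vanishes;
(ii) the Hessian at `P₀` is the block matrix with `(1,2)` and `(2,1)` entries
`ς‖ν^φ‖`, blocks `(3,4) = Z`, `(4,3) = -Z`, `(4,4) = ∂²_{γγ}Υ|_{P₀}` and zeros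
elsewhere; (iii) its determinant is `-ς²‖ν^φ‖²det(Z)²` and its signature is `0`;
in particular `P₀` is a non-degenerate critical point.
-/

namespace Stmt19

variable (n dg : ℕ)

/-- index type for the variables `(u, s, ξ'', γ)` -/
abbrev Idx := (Fin 1 ⊕ Fin 1) ⊕ (Fin (2 * n) ⊕ Fin (2 * n))

/-- the domain `ℝ × ℝ × 𝔱^{⊥_φ} × 𝔱^{⊥_φ}` of the phase -/
abbrev Dom := ℝ × ℝ × (Fin (2 * n) → ℝ) × (Fin (2 * n) → ℝ)

/-- the phase
`Υ_{x,ξ'}(u,s,ξ'',γ) = s(uς-1)‖ν^φ‖ - γᵀZξ'' + R2(γ)ᵀ(s ν^φ_u + ξ' + ξ'')`. -/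
noncomputable def phase (ς nrm : ℝ) (Z : Matrix (Fin (2 * n)) (Fin (2 * n)) ℝ)
    (a b : Fin dg → ℝ) (emb : (Fin (2 * n) → ℝ) →ₗ[ℝ] (Fin dg → ℝ))
    (R2 : (Fin (2 * n) → ℝ) → (Fin dg → ℝ)) : Dom n → ℝ := fun p =>
  p.2.1 * (p.1 * ς - 1) * nrm - dotProduct p.2.2.2 (Z.mulVec p.2.2.1) +
    dotProduct (R2 p.2.2.2) (p.2.1 • a + b + emb p.2.2.1)

/-- the critical point `P₀ = (1/ς, 0, 𝟎, 𝟎)` -/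
noncomputable def P0 (ς : ℝ) : Dom n :=
  (1 / ς, 0, 0, 0)

/-- the standard basis vectors of the domain, indexed by `Idx n` -/
noncomputable def bas : Idx n → Dom n
  | .inl (.inl _) => (1, 0, 0, 0)
  | .inl (.inr _) => (0, 1, 0, 0)
  | .inr (.inl i) => (0, 0, Pi.single i 1, 0)
  | .inr (.inr j) => (0, 0, 0, Pi.single j 1)

/-- the Hessian matrix of `f : Dom n → ℝ` at `p`, in the standard basis -/
noncomputable def hess (f : Dom n → ℝ) (p : Dom n) : Matrix (Idx n) (Idx n) ℝ :=
  Matrix.of fun i j => iteratedFDeriv ℝ 2 f p ![bas n i, bas n j]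

/-- the `(4,4)` block `∂²_{γγ}Υ_{x,ξ'}|_{P₀}`, i.e. the Hessian at `γ = 0` of
`γ ↦ R2(γ)ᵀ ξ'` -/
noncomputable def Ablock (b : Fin dg → ℝ)
    (R2 : (Fin (2 * n) → ℝ) → (Fin dg → ℝ)) :
    Matrix (Fin (2 * n)) (Fin (2 * n)) ℝ :=
  Matrix.of fun i j =>
    iteratedFDeriv ℝ 2 (fun γ => dotProduct (R2 γ) b) 0
      ![Pi.single i 1, Pi.single j 1]

/-- the claimed block form of the Hessian at `P₀`:
`[[0, ς‖ν^φ‖, 0, 0], [ς‖ν^φ‖, 0, 0, 0], [0, 0, 0, Z], [0, 0, -Z, A]]`. -/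
noncomputable def blockH (ς nrm : ℝ)
    (Z A : Matrix (Fin (2 * n)) (Fin (2 * n)) ℝ) : Matrix (Idx n) (Idx n) ℝ :=
  Matrix.fromBlocks
    (Matrix.fromBlocks 0 (Matrix.of fun _ _ => ς * nrm)
      (Matrix.of fun _ _ => ς * nrm) 0)
    0 0
    (Matrix.fromBlocks 0 Z (-Z) A)

end Stmt19

namespace S19P

open Matrix Stmt19 Kronecker

section Dot
variable {ι : Type*} [Fintype ι]

noncomputable def dotR (w : ι → ℝ) : (ι → ℝ) →L[ℝ] ℝ :=
  ∑ i, w i • ContinuousLinearMap.proj i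

@[simp] lemma dotR_apply (w v : ι → ℝ) : dotR w v = dotProduct w v := by
  simp [dotR, dotProduct]

@[simp] lemma dotR_zero : (dotR (0 : ι → ℝ)) = 0 := by
  ext v; simp

lemma hasFDerivAt_dot {E : Type*} [NormedAddCommGroup E] [NormedSpace ℝ E]
    {f g : E → ι → ℝ} {f' g' : E →L[ℝ] ι → ℝ} {x : E}
    (hf : HasFDerivAt f f' x) (hg : HasFDerivAt g g' x) :
    HasFDerivAt (fun y => dotProduct (f y) (g y))
      ((dotR (g x)).comp f' + (dotR (f x)).comp g') x := by
  have H : HasFDerivAt (fun y => ∑ i, f y i * g y i)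
      (∑ i, (f x i • ((ContinuousLinearMap.proj i :
          (ι → ℝ) →L[ℝ] ℝ).comp g') + g x i • ((ContinuousLinearMap.proj i :
          (ι → ℝ) →L[ℝ] ℝ).comp f'))) x := by
    refine HasFDerivAt.fun_sum fun i _ => ?_
    exact ((ContinuousLinearMap.proj i :
        (ι → ℝ) →L[ℝ] ℝ).hasFDerivAt.comp x hf).mul
      ((ContinuousLinearMap.proj i : (ι → ℝ) →L[ℝ] ℝ).hasFDerivAt.comp x hg)
  convert H using 1
  · rfl
  ext v
  simp [dotProduct, Finset.sum_add_distrib, mul_comm]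
  ring

lemma contDiff_dot {E : Type*} [NormedAddCommGroup E] [NormedSpace ℝ E]
    {f g : E → ι → ℝ} (hf : ContDiff ℝ (⊤ : ℕ∞) f) (hg : ContDiff ℝ (⊤ : ℕ∞) g) :
    ContDiff ℝ (⊤ : ℕ∞) (fun y => dotProduct (f y) (g y)) := by
  have : (fun y => dotProduct (f y) (g y)) = fun y => ∑ i, f y i * g y i := rfl
  rw [this]
  exact ContDiff.sum fun i _ =>
    (((ContinuousLinearMap.proj i : (ι → ℝ) →L[ℝ] ℝ).contDiff).comp hf).mul
      (((ContinuousLinearMap.proj i : (ι → ℝ) →L[ℝ] ℝ).contDiff).comp hg)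

end Dot

section Main

variable (n dg : ℕ)

abbrev V := Fin (2 * n) → ℝ
abbrev W := Fin dg → ℝ

noncomputable def pu : Dom n →L[ℝ] ℝ := ContinuousLinearMap.fst ℝ ℝ _
noncomputable def ps : Dom n →L[ℝ] ℝ :=
  (ContinuousLinearMap.fst ℝ ℝ _).comp (ContinuousLinearMap.snd ℝ ℝ _)
noncomputable def pxi : Dom n →L[ℝ] V n :=
  (ContinuousLinearMap.fst ℝ (V n) (V n)).comp
    ((ContinuousLinearMap.snd ℝ ℝ _).comp (ContinuousLinearMap.snd ℝ ℝ _))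
noncomputable def pga : Dom n →L[ℝ] V n :=
  (ContinuousLinearMap.snd ℝ (V n) (V n)).comp
    ((ContinuousLinearMap.snd ℝ ℝ _).comp (ContinuousLinearMap.snd ℝ ℝ _))

@[simp] lemma pu_apply (p : Dom n) : pu n p = p.1 := rfl
@[simp] lemma ps_apply (p : Dom n) : ps n p = p.2.1 := rfl
@[simp] lemma pxi_apply (p : Dom n) : pxi n p = p.2.2.1 := rfl
@[simp] lemma pga_apply (p : Dom n) : pga n p = p.2.2.2 := rfl

variable (ς nrm : ℝ) (Z : Matrix (Fin (2 * n)) (Fin (2 * n)) ℝ)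
variable (a b : Fin dg → ℝ) (emb : (V n) →ₗ[ℝ] (W dg))
variable (R2 : V n → W dg)

noncomputable def ZC : V n →L[ℝ] V n :=
  LinearMap.toContinuousLinearMap (Matrix.mulVecLin Z)

@[simp] lemma ZC_apply (v : V n) : ZC n Z v = Z.mulVec v := rfl

noncomputable def embC : V n →L[ℝ] W dg := LinearMap.toContinuousLinearMap emb

@[simp] lemma embC_apply (v : V n) : embC n dg emb v = emb v := rfl

noncomputable def Dphase (p : Dom n) : Dom n →L[ℝ] ℝ :=
  nrm • (p.2.1 • (ς • pu n) + (p.1 * ς - 1) • ps n)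
  - ((dotR (Z.mulVec p.2.2.1)).comp (pga n) +
      (dotR p.2.2.2).comp ((ZC n Z).comp (pxi n)))
  + ((dotR (p.2.1 • a + b + emb p.2.2.1)).comp
      ((fderiv ℝ R2 p.2.2.2).comp (pga n)) +
     (dotR (R2 p.2.2.2)).comp ((ps n).smulRight a + (embC n dg emb).comp (pxi n)))

lemma hasFDerivAt_phase (hR2 : Differentiable ℝ R2) (p : Dom n) :
    HasFDerivAt (phase n dg ς nrm Z a b emb R2)
      (Dphase n dg ς nrm Z a b emb R2 p) p := by
  have h1 : HasFDerivAt (fun q : Dom n => q.2.1 * (q.1 * ς - 1) * nrm)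
      (nrm • (p.2.1 • (ς • pu n) + (p.1 * ς - 1) • ps n)) p :=
    (((ps n).hasFDerivAt.mul
      (((pu n).hasFDerivAt.mul_const ς).sub_const 1)).mul_const nrm)
  have h2 : HasFDerivAt
      (fun q : Dom n => dotProduct q.2.2.2 (Z.mulVec q.2.2.1))
      ((dotR (Z.mulVec p.2.2.1)).comp (pga n) +
        (dotR p.2.2.2).comp ((ZC n Z).comp (pxi n))) p := by
    have := hasFDerivAt_dot (f := fun q : Dom n => q.2.2.2)
      (g := fun q : Dom n => ((ZC n Z).comp (pxi n)) q) (x := p)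
      ((pga n).hasFDerivAt) (((ZC n Z).comp (pxi n)).hasFDerivAt)
    simpa using this
  have h3 : HasFDerivAt (fun q : Dom n => R2 q.2.2.2)
      ((fderiv ℝ R2 p.2.2.2).comp (pga n)) p :=
    (hR2 p.2.2.2).hasFDerivAt.comp p (pga n).hasFDerivAt
  have h4 : HasFDerivAt (fun q : Dom n => q.2.1 • a + b + emb q.2.2.1)
      ((ps n).smulRight a + (embC n dg emb).comp (pxi n)) p := by
    have heq : (fun q : Dom n => q.2.1 • a + b + emb q.2.2.1)
        = fun q : Dom n =>
          ((ps n).smulRight a + (embC n dg emb).comp (pxi n)) q + b := by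
      funext q
      simp [ContinuousLinearMap.smulRight_apply]
      module
    rw [heq]
    exact (ContinuousLinearMap.hasFDerivAt _).add_const b
  exact (h1.sub h2).add (hasFDerivAt_dot h3 h4)

lemma fderiv_phase (hR2 : Differentiable ℝ R2) (p : Dom n) :
    fderiv ℝ (phase n dg ς nrm Z a b emb R2) p
      = Dphase n dg ς nrm Z a b emb R2 p :=
  (hasFDerivAt_phase n dg ς nrm Z a b emb R2 hR2 p).fderiv

lemma Dphase_apply (p v : Dom n) :
    Dphase n dg ς nrm Z a b emb R2 p v =
      nrm * (p.2.1 * (ς * v.1) + (p.1 * ς - 1) * v.2.1)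
      - (dotProduct (Z.mulVec p.2.2.1) v.2.2.2 +
          dotProduct p.2.2.2 (Z.mulVec v.2.2.1))
      + (dotProduct (p.2.1 • a + b + emb p.2.2.1)
            (fderiv ℝ R2 p.2.2.2 v.2.2.2) +
         dotProduct (R2 p.2.2.2) (v.2.1 • a + emb v.2.2.1)) := by
  simp [Dphase, ContinuousLinearMap.smulRight_apply]
  ring

lemma contDiff_phase (hR2smooth : ContDiff ℝ (⊤ : ℕ∞) R2) :
    ContDiff ℝ (⊤ : ℕ∞) (phase n dg ς nrm Z a b emb R2) := by
  have hu : ContDiff ℝ (⊤ : ℕ∞) (fun q : Dom n => q.1) := contDiff_fst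
  have hs : ContDiff ℝ (⊤ : ℕ∞) (fun q : Dom n => q.2.1) := contDiff_fst.comp contDiff_snd
  have hxi : ContDiff ℝ (⊤ : ℕ∞) (fun q : Dom n => q.2.2.1) :=
    contDiff_fst.comp (contDiff_snd.comp contDiff_snd)
  have hga : ContDiff ℝ (⊤ : ℕ∞) (fun q : Dom n => q.2.2.2) :=
    contDiff_snd.comp (contDiff_snd.comp contDiff_snd)
  refine ContDiff.add (ContDiff.sub ?_ ?_) ?_
  · exact (hs.mul ((hu.mul contDiff_const).sub contDiff_const)).mul contDiff_const
  · exact contDiff_dot hga ((ZC n Z).contDiff.comp hxi)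
  · exact contDiff_dot (hR2smooth.comp hga)
      (((hs.smul contDiff_const).add contDiff_const).add
        ((embC n dg emb).contDiff.comp hxi))

variable {R2} in
lemma Dphase_P0 (hς : ς ≠ 0) (hR2zero : R2 0 = 0) (hR2deriv : fderiv ℝ R2 0 = 0) :
    Dphase n dg ς nrm Z a b emb R2 (P0 n ς) = 0 := by
  refine ContinuousLinearMap.ext fun v => ?_
  rw [Dphase_apply]
  simp [P0, hR2zero, hR2deriv, hς]

/-- the linear map `w ↦ (i ↦ ⟨w, emb eᵢ⟩)` -/
noncomputable def TC : W dg →L[ℝ] V n :=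
  ContinuousLinearMap.pi fun i => dotR (emb (Pi.single i 1))

variable {Z R2} in
lemma gamma_small (hZinv : IsUnit Z.det) (hR2smooth : ContDiff ℝ (⊤ : ℕ∞) R2)
    (hR2zero : R2 0 = 0) (hR2deriv : fderiv ℝ R2 0 = 0) :
    ∃ U ∈ nhds (0 : V n), ∀ γ ∈ U,
      (Matrix.vecMul γ Z =
        fun i => dotProduct (R2 γ) (emb (Pi.single i 1))) → γ = 0 := by
  classical
  set MvInv : V n →L[ℝ] V n :=
    LinearMap.toContinuousLinearMap (Matrix.vecMulLinear Z⁻¹) with hMvInv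
  set K : ℝ := ‖MvInv‖ with hK
  have hK0 : 0 ≤ K := norm_nonneg _
  set ε : ℝ := (2 * (K + 1))⁻¹ with hε
  have hεpos : 0 < ε := by positivity
  set φ : V n → V n := fun γ => TC n dg emb (R2 γ) with hφ
  have hder : HasFDerivAt φ (0 : V n →L[ℝ] V n) 0 := by
    have h0 : HasFDerivAt (TC n dg emb) (TC n dg emb : W dg →L[ℝ] V n) (R2 0) :=
      (TC n dg emb).hasFDerivAt
    have := h0.comp (0 : V n) ((hR2smooth.differentiable (by simp) 0).hasFDerivAt)
    rwa [hR2deriv, ContinuousLinearMap.comp_zero] at this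
  have hlo : (fun γ : V n => φ γ) =o[nhds 0] (fun γ => γ) := by
    have := hder.isLittleO
    simpa [hφ, hR2zero] using this
  have hbound : ∀ᶠ γ in nhds (0 : V n), ‖φ γ‖ ≤ ε * ‖γ‖ := hlo.def hεpos
  refine ⟨{γ | ‖φ γ‖ ≤ ε * ‖γ‖}, hbound, fun γ hγ heq => ?_⟩
  have hφeq : Matrix.vecMul γ Z = φ γ := by
    rw [heq]
    funext i
    simp [hφ, TC, dotProduct_comm]
  have hγeq : γ = MvInv (Matrix.vecMul γ Z) := by
    simp only [hMvInv, LinearMap.coe_toContinuousLinearMap', Matrix.vecMulLinear_apply]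
    rw [Matrix.vecMul_vecMul, Matrix.mul_nonsing_inv Z hZinv, Matrix.vecMul_one]
  have h1 : ‖γ‖ ≤ K * ‖φ γ‖ := by
    calc ‖γ‖ = ‖MvInv (Matrix.vecMul γ Z)‖ := by rw [← hγeq]
    _ ≤ K * ‖Matrix.vecMul γ Z‖ := MvInv.le_opNorm _
    _ = K * ‖φ γ‖ := by rw [hφeq]
  have h2 : ‖φ γ‖ ≤ ε * ‖γ‖ := hγ
  have hγ0 : ‖γ‖ ≤ 0 := by
    have h3 : ‖γ‖ ≤ K * (ε * ‖γ‖) := le_trans h1 (by nlinarith)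
    have h4 : ε * (2 * (K + 1)) = 1 := by
      rw [hε]; field_simp
    nlinarith [norm_nonneg γ]
  have := le_antisymm hγ0 (norm_nonneg γ)
  exact norm_eq_zero.mp this

variable {R2} in
lemma hasFDerivAt_R2comp (hR2smooth : ContDiff ℝ (⊤ : ℕ∞) R2) (p : Dom n) :
    HasFDerivAt (fun q : Dom n => R2 q.2.2.2)
      ((fderiv ℝ R2 p.2.2.2).comp (pga n)) p :=
  ((hR2smooth.differentiable (by simp) p.2.2.2).hasFDerivAt).comp p (pga n).hasFDerivAt

variable {R2} in
lemma hess_entry (hR2smooth : ContDiff ℝ (⊤ : ℕ∞) R2) (i j : Idx n) :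
    hess n (phase n dg ς nrm Z a b emb R2) (P0 n ς) i j =
      fderiv ℝ (fun p => Dphase n dg ς nrm Z a b emb R2 p (bas n j))
        (P0 n ς) (bas n i) := by
  have hphase : ContDiff ℝ (⊤ : ℕ∞) (phase n dg ς nrm Z a b emb R2) :=
    contDiff_phase n dg ς nrm Z a b emb R2 hR2smooth
  have hdiff : DifferentiableAt ℝ (fderiv ℝ (phase n dg ς nrm Z a b emb R2))
      (P0 n ς) := ((hphase.fderiv_right (m := (⊤ : ℕ∞)) (by simp)).differentiable (by simp)) _
  have hfe : (fun p => Dphase n dg ς nrm Z a b emb R2 p (bas n j))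
      = fun p => (fderiv ℝ (phase n dg ς nrm Z a b emb R2) p) (bas n j) :=
    funext fun p => by
      rw [fderiv_phase n dg ς nrm Z a b emb R2 (hR2smooth.differentiable (by simp)) p]
  have h0 : hess n (phase n dg ς nrm Z a b emb R2) (P0 n ς) i j =
      iteratedFDeriv ℝ 2 (phase n dg ς nrm Z a b emb R2) (P0 n ς)
        ![bas n i, bas n j] := rfl
  rw [h0, iteratedFDeriv_two_apply, hfe,
    fderiv_clm_apply hdiff (differentiableAt_const _)]
  simp

variable {R2} in
lemma col_u :
    fderiv ℝ (fun p : Dom n => Dphase n dg ς nrm Z a b emb R2 p (1, 0, 0, 0))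
      (P0 n ς) = (nrm * ς) • ps n := by
  have hfun : (fun p : Dom n => Dphase n dg ς nrm Z a b emb R2 p (1, 0, 0, 0))
      = ⇑((nrm * ς) • ps n) := by
    funext p
    rw [Dphase_apply]
    simp
    ring
  rw [hfun, ContinuousLinearMap.fderiv]

variable {R2} in
lemma col_s (hR2smooth : ContDiff ℝ (⊤ : ℕ∞) R2) (hR2zero : R2 0 = 0)
    (hR2deriv : fderiv ℝ R2 0 = 0) :
    fderiv ℝ (fun p : Dom n => Dphase n dg ς nrm Z a b emb R2 p (0, 1, 0, 0))
      (P0 n ς) = (nrm * ς) • pu n := by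
  have hfun : (fun p : Dom n => Dphase n dg ς nrm Z a b emb R2 p (0, 1, 0, 0))
      = fun p : Dom n => nrm * (p.1 * ς - 1) + dotProduct (R2 p.2.2.2) a := by
    funext p
    rw [Dphase_apply]
    simp
  have h : HasFDerivAt
      (fun p : Dom n => nrm * (p.1 * ς - 1) + dotProduct (R2 p.2.2.2) a)
      (nrm • (ς • pu n) +
        ((dotR a).comp ((fderiv ℝ R2 (P0 n ς).2.2.2).comp (pga n)) +
          (dotR (R2 (P0 n ς).2.2.2)).comp (0 : Dom n →L[ℝ] W dg))) (P0 n ς) := by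
    exact ((((pu n).hasFDerivAt.mul_const ς).sub_const 1).const_mul nrm).add
      (hasFDerivAt_dot (hasFDerivAt_R2comp n dg hR2smooth (P0 n ς))
        (hasFDerivAt_const a _))
  rw [hfun, h.fderiv]
  refine ContinuousLinearMap.ext fun v => ?_
  have : (P0 n ς).2.2.2 = (0 : V n) := rfl
  simp [this, hR2deriv, hR2zero]
  ring

variable {R2} in
lemma col_xi (hR2smooth : ContDiff ℝ (⊤ : ℕ∞) R2) (hR2zero : R2 0 = 0)
    (hR2deriv : fderiv ℝ R2 0 = 0) (k : Fin (2 * n)) :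
    fderiv ℝ (fun p : Dom n =>
        Dphase n dg ς nrm Z a b emb R2 p (0, 0, Pi.single k 1, 0)) (P0 n ς)
      = -((dotR (Z.mulVec (Pi.single k 1))).comp (pga n)) := by
  have hfun : (fun p : Dom n =>
      Dphase n dg ς nrm Z a b emb R2 p (0, 0, Pi.single k 1, 0))
      = fun p : Dom n => dotProduct (R2 p.2.2.2) (emb (Pi.single k 1))
          - dotProduct p.2.2.2 (Z.mulVec (Pi.single k 1)) := by
    funext p
    rw [Dphase_apply]
    simp
    ring
  have h : HasFDerivAt
      (fun p : Dom n => dotProduct (R2 p.2.2.2) (emb (Pi.single k 1))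
          - dotProduct p.2.2.2 (Z.mulVec (Pi.single k 1)))
      (((dotR (emb (Pi.single k 1))).comp
          ((fderiv ℝ R2 (P0 n ς).2.2.2).comp (pga n)) +
        (dotR (R2 (P0 n ς).2.2.2)).comp (0 : Dom n →L[ℝ] W dg)) -
       ((dotR (Z.mulVec (Pi.single k 1))).comp (pga n) +
        (dotR (P0 n ς).2.2.2).comp (0 : Dom n →L[ℝ] V n))) (P0 n ς) :=
    (hasFDerivAt_dot (hasFDerivAt_R2comp n dg hR2smooth (P0 n ς))
        (hasFDerivAt_const _ _)).sub
      (hasFDerivAt_dot (pga n).hasFDerivAt (hasFDerivAt_const _ _))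
  rw [hfun, h.fderiv]
  refine ContinuousLinearMap.ext fun v => ?_
  have h2 : (P0 n ς).2.2.2 = (0 : V n) := rfl
  simp [h2, hR2deriv, hR2zero]

variable {R2} in
lemma col_ga (hR2smooth : ContDiff ℝ (⊤ : ℕ∞) R2) (hR2zero : R2 0 = 0)
    (hR2deriv : fderiv ℝ R2 0 = 0) (l : Fin (2 * n)) :
    fderiv ℝ (fun p : Dom n =>
        Dphase n dg ς nrm Z a b emb R2 p (0, 0, 0, Pi.single l 1)) (P0 n ς)
      = (dotR b).comp
          ((((fderiv ℝ (fderiv ℝ R2) 0).comp (pga n)).flip) (Pi.single l 1))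
        - (dotR (Pi.single l 1)).comp ((ZC n Z).comp (pxi n)) := by
  have hfun : (fun p : Dom n =>
      Dphase n dg ς nrm Z a b emb R2 p (0, 0, 0, Pi.single l 1))
      = fun p : Dom n =>
          dotProduct (p.2.1 • a + b + emb p.2.2.1)
            (fderiv ℝ R2 p.2.2.2 (Pi.single l 1))
          - dotProduct (Z.mulVec p.2.2.1) (Pi.single l 1) := by
    funext p
    rw [Dphase_apply]
    simp
    ring
  have hc : HasFDerivAt (fun p : Dom n => fderiv ℝ R2 p.2.2.2)
      ((fderiv ℝ (fderiv ℝ R2) 0).comp (pga n)) (P0 n ς) := by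
    have hD : DifferentiableAt ℝ (fderiv ℝ R2) 0 :=
      ((hR2smooth.fderiv_right (m := (⊤ : ℕ∞)) (by simp)).differentiable (by simp)) 0
    exact hD.hasFDerivAt.comp (P0 n ς) (pga n).hasFDerivAt
  have happ : HasFDerivAt
      (fun p : Dom n => fderiv ℝ R2 p.2.2.2 (Pi.single l 1))
      ((fderiv ℝ R2 (P0 n ς).2.2.2).comp 0 +
        ((fderiv ℝ (fderiv ℝ R2) 0).comp (pga n)).flip (Pi.single l 1))
      (P0 n ς) := hc.clm_apply (hasFDerivAt_const _ _)
  have h4 : HasFDerivAt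
      (fun q : Dom n => q.2.1 • a + b + emb q.2.2.1)
      ((ps n).smulRight a + (embC n dg emb).comp (pxi n)) (P0 n ς) := by
    have heq : (fun q : Dom n => q.2.1 • a + b + emb q.2.2.1)
        = fun q : Dom n =>
          ((ps n).smulRight a + (embC n dg emb).comp (pxi n)) q + b := by
      funext q
      simp [ContinuousLinearMap.smulRight_apply]
      module
    rw [heq]
    exact (ContinuousLinearMap.hasFDerivAt _).add_const b
  have h := (hasFDerivAt_dot h4 happ).sub
    (hasFDerivAt_dot (((ZC n Z).comp (pxi n)).hasFDerivAt)
      (hasFDerivAt_const (Pi.single l 1) (P0 n ς)))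
  have h' : HasFDerivAt
      (fun p : Dom n =>
        dotProduct (p.2.1 • a + b + emb p.2.2.1)
          (fderiv ℝ R2 p.2.2.2 (Pi.single l 1))
        - dotProduct (Z.mulVec p.2.2.1) (Pi.single l 1))
      ((dotR ((fderiv ℝ R2 (P0 n ς).2.2.2) (Pi.single l 1))).comp
          ((ps n).smulRight a + (embC n dg emb).comp (pxi n)) +
        (dotR ((P0 n ς).2.1 • a + b + emb (P0 n ς).2.2.1)).comp
          ((fderiv ℝ R2 (P0 n ς).2.2.2).comp (0 : Dom n →L[ℝ] V n) +
            ((fderiv ℝ (fderiv ℝ R2) 0).comp (pga n)).flip (Pi.single l 1)) -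
        ((dotR (Pi.single l 1)).comp ((ZC n Z).comp (pxi n)) +
          (dotR (Z.mulVec (P0 n ς).2.2.1)).comp (0 : Dom n →L[ℝ] V n)))
      (P0 n ς) := h
  rw [hfun, h'.fderiv]
  refine ContinuousLinearMap.ext fun v => ?_
  have h1 : (P0 n ς).2.2.2 = (0 : V n) := rfl
  have h2 : (P0 n ς).2.2.1 = (0 : V n) := rfl
  have h3 : (P0 n ς).2.1 = (0 : ℝ) := rfl
  simp [h1, h2, h3, hR2deriv, hR2zero]

variable {R2} in
lemma Ablock_eq (hR2smooth : ContDiff ℝ (⊤ : ℕ∞) R2) (k l : Fin (2 * n)) :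
    Ablock n dg b R2 k l =
      dotProduct b
        (fderiv ℝ (fderiv ℝ R2) 0 (Pi.single k 1) (Pi.single l 1)) := by
  have hdiff := hR2smooth.differentiable (by simp)
  have hfd : ∀ γ : V n, HasFDerivAt (fun γ => dotProduct (R2 γ) b)
      ((dotR b).comp (fderiv ℝ R2 γ)) γ := fun γ => by
    have := hasFDerivAt_dot (f := R2) (g := fun _ => b) (x := γ)
      (hdiff γ).hasFDerivAt (hasFDerivAt_const b γ)
    simpa using this
  have hfe : fderiv ℝ (fun γ : V n => dotProduct (R2 γ) b)
      = fun γ => (dotR b).comp (fderiv ℝ R2 γ) := funext fun γ => (hfd γ).fderiv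
  have hD : DifferentiableAt ℝ (fderiv ℝ R2) 0 :=
    ((hR2smooth.fderiv_right (m := (⊤ : ℕ∞)) (by simp)).differentiable (by simp)) 0
  have hcomp : HasFDerivAt
      (fun γ : V n => (ContinuousLinearMap.compL ℝ (V n) (W dg) ℝ) (dotR b)
        (fderiv ℝ R2 γ))
      (((ContinuousLinearMap.compL ℝ (V n) (W dg) ℝ) (dotR b)).comp
        (fderiv ℝ (fderiv ℝ R2) 0)) 0 :=
    ((((ContinuousLinearMap.compL ℝ (V n) (W dg) ℝ) (dotR b))).hasFDerivAt).comp
      (0 : V n) hD.hasFDerivAt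
  have h0 : Ablock n dg b R2 k l =
      iteratedFDeriv ℝ 2 (fun γ : V n => dotProduct (R2 γ) b) 0
        ![Pi.single k 1, Pi.single l 1] := rfl
  rw [h0, iteratedFDeriv_two_apply, hfe]
  have h1 : (fun γ : V n => (dotR b).comp (fderiv ℝ R2 γ))
      = fun γ : V n => (ContinuousLinearMap.compL ℝ (V n) (W dg) ℝ) (dotR b)
        (fderiv ℝ R2 γ) := rfl
  rw [h1, hcomp.fderiv]
  simp

variable {R2} in
lemma Ablock_symm (hR2smooth : ContDiff ℝ (⊤ : ℕ∞) R2) (k l : Fin (2 * n)) :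
    Ablock n dg b R2 k l = Ablock n dg b R2 l k := by
  have hD : DifferentiableAt ℝ (fderiv ℝ R2) 0 :=
    ((hR2smooth.fderiv_right (m := (⊤ : ℕ∞)) (by simp)).differentiable (by simp)) 0
  rw [Ablock_eq n dg b hR2smooth k l, Ablock_eq n dg b hR2smooth l k]
  congr 1
  exact second_derivative_symmetric
    (fun y => ((hR2smooth.differentiable (by simp)) y).hasFDerivAt)
    hD.hasFDerivAt _ _

variable {Z R2} in
lemma hess_eq_blockH (hZskew : Z.transpose = -Z) (hR2smooth : ContDiff ℝ (⊤ : ℕ∞) R2)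
    (hR2zero : R2 0 = 0) (hR2deriv : fderiv ℝ R2 0 = 0) :
    hess n (phase n dg ς nrm Z a b emb R2) (P0 n ς)
      = blockH n ς nrm Z (Ablock n dg b R2) := by
  have hZ' : ∀ k l, Z l k = - Z k l := fun k l => by
    have := congrFun (congrFun hZskew k) l
    simpa [Matrix.transpose_apply, Matrix.neg_apply] using this
  ext i j
  rw [hess_entry n dg ς nrm Z a b emb hR2smooth i j]
  rcases j with (j | j) | (j | j)
  · have hb : bas n (Sum.inl (Sum.inl j))
        = ((1 : ℝ), (0 : ℝ), (0 : V n), (0 : V n)) := rfl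
    rw [hb, col_u n dg ς nrm Z a b emb]
    rcases i with (i | i) | (i | i) <;>
      simp [bas, blockH, Matrix.fromBlocks] <;> ring
  · have hb : bas n (Sum.inl (Sum.inr j))
        = ((0 : ℝ), (1 : ℝ), (0 : V n), (0 : V n)) := rfl
    rw [hb, col_s n dg ς nrm Z a b emb hR2smooth hR2zero hR2deriv]
    rcases i with (i | i) | (i | i) <;>
      simp [bas, blockH, Matrix.fromBlocks] <;> ring
  · have hb : bas n (Sum.inr (Sum.inl j))
        = ((0 : ℝ), (0 : ℝ), Pi.single j 1, (0 : V n)) := rfl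
    rw [hb, col_xi n dg ς nrm Z a b emb hR2smooth hR2zero hR2deriv j]
    rcases i with (i | i) | (i | i) <;>
      simp [bas, blockH, Matrix.fromBlocks, Matrix.mulVec_single,
        dotProduct_single, single_dotProduct]
  · have hb : bas n (Sum.inr (Sum.inr j))
        = ((0 : ℝ), (0 : ℝ), (0 : V n), Pi.single j 1) := rfl
    rw [hb, col_ga n dg ς nrm Z a b emb hR2smooth hR2zero hR2deriv j]
    rcases i with (i | i) | (i | i)
    · simp [bas, blockH, Matrix.fromBlocks]
    · simp [bas, blockH, Matrix.fromBlocks]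
    · simp [bas, blockH, Matrix.fromBlocks, Matrix.mulVec_single,
        dotProduct_single, single_dotProduct]
      rw [hZ' j i]
    · simp [bas, blockH, Matrix.fromBlocks, Matrix.mulVec_single,
        dotProduct_single, single_dotProduct]
      rw [Ablock_eq n dg b hR2smooth i j]

variable {Z} in
lemma isHermitian_blockH (hZskew : Z.transpose = -Z)
    {A : Matrix (Fin (2 * n)) (Fin (2 * n)) ℝ} (hA : ∀ k l, A k l = A l k) :
    (blockH n ς nrm Z A).IsHermitian := by
  have hZ' : ∀ k l, Z l k = - Z k l := fun k l => by
    have := congrFun (congrFun hZskew k) l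
    simpa [Matrix.transpose_apply, Matrix.neg_apply] using this
  show (blockH n ς nrm Z A).conjTranspose = blockH n ς nrm Z A
  ext i j
  rw [Matrix.conjTranspose_apply]
  rcases i with (i | i) | (i | i) <;> rcases j with (j | j) | (j | j) <;>
    simp [blockH, Matrix.fromBlocks] <;>
      first
        | rfl
        | (rw [hZ' i j]; ring)
        | (rw [hZ' j i]; ring)
        | exact hA j i


end Main

lemma detJ (m : ℕ) :
    (Matrix.fromBlocks (0 : Matrix (Fin m) (Fin m) ℝ) (-1 : Matrix (Fin m) (Fin m) ℝ) (1 : Matrix (Fin m) (Fin m) ℝ) (0 : Matrix (Fin m) (Fin m) ℝ)).det = 1 := by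
  classical
  let e : Fin 2 × Fin m ≃ (Fin m ⊕ Fin m) :=
    { toFun := fun p => if p.1 = 0 then Sum.inl p.2 else Sum.inr p.2
      invFun := Sum.elim (fun j => (0, j)) (fun j => (1, j))
      left_inv := by
        rintro ⟨i, j⟩
        fin_cases i <;> simp
      right_inv := by
        rintro (j | j) <;> simp }
  have hM : Matrix.fromBlocks (0 : Matrix (Fin m) (Fin m) ℝ) (-1 : Matrix (Fin m) (Fin m) ℝ)
      (1 : Matrix (Fin m) (Fin m) ℝ) (0 : Matrix (Fin m) (Fin m) ℝ)
      = Matrix.reindex e e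
          ((!![0, -1; 1, 0] : Matrix (Fin 2) (Fin 2) ℝ) ⊗ₖ
            (1 : Matrix (Fin m) (Fin m) ℝ)) := by
    ext i j
    rcases i with i | i <;> rcases j with j | j <;>
      simp [e, Matrix.fromBlocks, Matrix.kroneckerMap_apply, Matrix.one_apply,
        apply_ite (f := fun x : ℝ => -x)]
  rw [hM, Matrix.det_reindex_self, Matrix.det_kronecker]
  have h2 : (!![0, -1; 1, 0] : Matrix (Fin 2) (Fin 2) ℝ).det = 1 := by
    rw [Matrix.det_fin_two]
    norm_num
  rw [h2]
  simp

lemma detM2 (m : ℕ) (Z A : Matrix (Fin m) (Fin m) ℝ) :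
    (Matrix.fromBlocks 0 Z (-Z) A).det = Z.det * Z.det := by
  have h := Matrix.det_mul (Matrix.fromBlocks 0 Z (-Z) A)
    (Matrix.fromBlocks (0 : Matrix (Fin m) (Fin m) ℝ) (-1 : Matrix (Fin m) (Fin m) ℝ) (1 : Matrix (Fin m) (Fin m) ℝ) (0 : Matrix (Fin m) (Fin m) ℝ))
  rw [Matrix.fromBlocks_multiply] at h
  simp only [Matrix.zero_mul, Matrix.mul_zero, Matrix.mul_one, Matrix.mul_neg,
    Matrix.neg_mul, neg_neg, zero_add, add_zero, Matrix.mul_one, neg_zero] at h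
  rw [detJ, mul_one] at h
  rw [← h, Matrix.det_fromBlocks_zero₁₂]

lemma detM1 (c : ℝ) :
    (Matrix.fromBlocks (0 : Matrix (Fin 1) (Fin 1) ℝ)
      (Matrix.of fun _ _ => c) (Matrix.of fun _ _ => c)
      (0 : Matrix (Fin 1) (Fin 1) ℝ)).det = -(c * c) := by
  have h := Matrix.det_mul (Matrix.fromBlocks (0 : Matrix (Fin 1) (Fin 1) ℝ)
      (Matrix.of fun _ _ => c) (Matrix.of fun _ _ => c)
      (0 : Matrix (Fin 1) (Fin 1) ℝ))
    (Matrix.fromBlocks (0 : Matrix (Fin 1) (Fin 1) ℝ) (-1 : Matrix (Fin 1) (Fin 1) ℝ) (1 : Matrix (Fin 1) (Fin 1) ℝ) (0 : Matrix (Fin 1) (Fin 1) ℝ))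
  rw [Matrix.fromBlocks_multiply] at h
  simp only [Matrix.zero_mul, Matrix.mul_zero, Matrix.mul_one, Matrix.mul_neg,
    Matrix.neg_mul, neg_neg, zero_add, add_zero, neg_zero] at h
  rw [detJ, mul_one] at h
  rw [← h, Matrix.det_fromBlocks_zero₁₂]
  simp [Matrix.det_fin_one]


lemma sign_count_core {N : Type*} [Fintype N] [DecidableEq N] {H : Matrix N N ℝ}
    (hH : H.IsHermitian) {ι : Type*} [Fintype ι]
    (v : ι → EuclideanSpace ℝ N) (hv : LinearIndependent ℝ v)
    (hiso : ∀ x ∈ Submodule.span ℝ (Set.range v),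
      dotProduct (x : N → ℝ) (H.mulVec x) = 0)
    {P : N → Prop} [DecidablePred P] (ε : ℝ)
    (hsign : ∀ i, P i → ∀ c : ℝ, c ≠ 0 → 0 < ε * (hH.eigenvalues i * c ^ 2)) :
    Fintype.card {i : N // P i} + Fintype.card ι ≤ Fintype.card N := by
  classical
  set B := hH.eigenvectorBasis with hB
  set L := Submodule.span ℝ (Set.range v) with hL
  set E := Submodule.span ℝ (Set.range fun i : {i : N // P i} =>
    (B i.1 : EuclideanSpace ℝ N)) with hE
  have horth : Orthonormal ℝ (fun i : {i : N // P i} => (B i.1 : EuclideanSpace ℝ N)) :=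
    B.orthonormal.comp _ Subtype.val_injective
  -- every nonzero element of E has positive quadratic form
  have hpos : ∀ x ∈ E, x ≠ 0 → 0 < ε * dotProduct (x : N → ℝ) (H.mulVec x) := by
    intro x hx hx0
    rw [hE, Submodule.mem_span_range_iff_exists_fun] at hx
    obtain ⟨c, hc⟩ := hx
    have hxc : (x : N → ℝ) = ∑ i, c i • (B i.1 : N → ℝ) := by
      rw [← hc]
      simp only [WithLp.ofLp_sum, WithLp.ofLp_smul]
    have hmul : H.mulVec x = ∑ i, (c i * hH.eigenvalues i.1) • (B i.1 : N → ℝ) := by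
      rw [hxc]
      have hlin : H.mulVec (∑ i, c i • (B i.1 : N → ℝ))
          = ∑ i, c i • (H.mulVec (B i.1 : N → ℝ)) := by
        have h1 : ∀ y : N → ℝ, H.mulVec y = H.mulVecLin y := fun y => rfl
        rw [h1, map_sum]
        refine Finset.sum_congr rfl fun i _ => ?_
        rw [_root_.map_smul]
        rfl
      rw [hlin]
      refine Finset.sum_congr rfl fun i _ => ?_
      have h2 : H *ᵥ (B i.1 : N → ℝ) = hH.eigenvalues i.1 • (B i.1 : N → ℝ) :=
        hH.mulVec_eigenvectorBasis i.1
      rw [h2, smul_smul, mul_comm]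
    have hdot : dotProduct (x : N → ℝ) (H.mulVec x)
        = ∑ i, c i * (c i * hH.eigenvalues i.1) := by
      have hy : H.mulVec x = ((∑ i, (c i * hH.eigenvalues i.1) • (B i.1 : EuclideanSpace ℝ N) : EuclideanSpace ℝ N) : N → ℝ) := by
        rw [hmul]; simp only [WithLp.ofLp_sum, WithLp.ofLp_smul]
      have hid : dotProduct (x : N → ℝ) (H.mulVec x)
          = inner (𝕜 := ℝ) x ((∑ i, (c i * hH.eigenvalues i.1) • (B i.1 : EuclideanSpace ℝ N) : EuclideanSpace ℝ N)) := by
        rw [hy]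
        simp [PiLp.inner_apply, dotProduct, RCLike.inner_apply, conj_trivial]
        exact Finset.sum_congr rfl fun _ _ => mul_comm _ _
      rw [hid, ← hc, sum_inner]
      refine Finset.sum_congr rfl fun i _ => ?_
      rw [real_inner_smul_left, horth.inner_right_fintype]
    rw [hdot, Finset.mul_sum]
    have hne : ∃ i, c i ≠ 0 := by
      by_contra hall
      push_neg at hall
      apply hx0
      rw [← hc]
      simp [hall]
    obtain ⟨i0, hi0⟩ := hne
    have : ∀ i ∈ Finset.univ, 0 ≤ ε * (c i * (c i * hH.eigenvalues i.1)) := by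
      intro i _
      rcases eq_or_ne (c i) 0 with h | h
      · simp [h]
      · have := hsign i.1 i.2 (c i) h
        nlinarith
    have hlt : 0 < ε * (c i0 * (c i0 * hH.eigenvalues i0.1)) := by
      have := hsign i0.1 i0.2 (c i0) hi0
      nlinarith
    exact Finset.sum_pos' this ⟨i0, Finset.mem_univ i0, hlt⟩
  have hdisj : L ⊓ E = ⊥ := by
    rw [eq_bot_iff]
    rintro x ⟨hxL, hxE⟩
    by_contra hx0
    have h1 := hiso x hxL
    have h2 := hpos x hxE (by simpa using hx0)
    rw [h1, mul_zero] at h2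
    exact lt_irrefl 0 h2
  have hrankL : Module.finrank ℝ L = Fintype.card ι := finrank_span_eq_card hv
  have hrankE : Module.finrank ℝ E = Fintype.card {i : N // P i} :=
    finrank_span_eq_card horth.linearIndependent
  have := Submodule.finrank_sup_add_finrank_inf_eq L E
  rw [hdisj] at this
  have hle : Module.finrank ℝ (L ⊔ E : Submodule ℝ (EuclideanSpace ℝ N))
      ≤ Module.finrank ℝ (EuclideanSpace ℝ N) := Submodule.finrank_le _
  rw [finrank_euclideanSpace] at hle
  simp [hrankL, hrankE] at this
  omega

lemma balanced {N : Type*} [Fintype N] [DecidableEq N] {H : Matrix N N ℝ}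
    (hH : H.IsHermitian) (hdet : H.det ≠ 0) {ι : Type*} [Fintype ι]
    (v : ι → EuclideanSpace ℝ N) (hv : LinearIndependent ℝ v)
    (hiso : ∀ x ∈ Submodule.span ℝ (Set.range v),
      dotProduct (x : N → ℝ) (H.mulVec x) = 0)
    (hcard : Fintype.card N = 2 * Fintype.card ι) :
    Nat.card {i : N // 0 < hH.eigenvalues i} =
      Nat.card {i : N // hH.eigenvalues i < 0} := by
  classical
  have hev : ∀ i, hH.eigenvalues i ≠ 0 := by
    intro i hi
    apply hdet
    rw [hH.det_eq_prod_eigenvalues]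
    refine Finset.prod_eq_zero (Finset.mem_univ i) ?_
    exact_mod_cast hi
  have hposcnt := sign_count_core hH v hv hiso (P := fun i => 0 < hH.eigenvalues i)
    (1 : ℝ) (fun i hi c hc => by
      have : 0 < c ^ 2 := by positivity
      nlinarith)
  have hnegcnt := sign_count_core hH v hv hiso (P := fun i => hH.eigenvalues i < 0)
    (-1 : ℝ) (fun i hi c hc => by
      have : 0 < c ^ 2 := by positivity
      nlinarith)
  have hsplit : Fintype.card {i : N // 0 < hH.eigenvalues i} +
      Fintype.card {i : N // hH.eigenvalues i < 0} = Fintype.card N := by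
    rw [Fintype.card_subtype, Fintype.card_subtype]
    have : (Finset.univ.filter fun i => hH.eigenvalues i < 0)
        = Finset.univ.filter fun i => ¬ (0 < hH.eigenvalues i) := by
      refine Finset.filter_congr fun i _ => ?_
      constructor
      · intro h; exact not_lt.mpr (le_of_lt h)
      · intro h; exact lt_of_le_of_ne (not_lt.mp h) (hev i)
    rw [this]
    exact Finset.card_filter_add_card_filter_not _
  have hp' : Fintype.card {i : N // 0 < hH.eigenvalues i} + Fintype.card ι
      ≤ Fintype.card N := hposcnt
  have hn' : Fintype.card {i : N // hH.eigenvalues i < 0} + Fintype.card ι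
      ≤ Fintype.card N := hnegcnt
  rw [Nat.card_eq_fintype_card, Nat.card_eq_fintype_card]
  omega

section Main2
variable (n dg : ℕ) (ς nrm : ℝ) (Z : Matrix (Fin (2 * n)) (Fin (2 * n)) ℝ)

lemma det_blockH (A : Matrix (Fin (2 * n)) (Fin (2 * n)) ℝ) :
    (blockH n ς nrm Z A).det = -(ς ^ 2 * nrm ^ 2 * Z.det ^ 2) := by
  have h1 : (blockH n ς nrm Z A).det
      = (Matrix.fromBlocks (0 : Matrix (Fin 1) (Fin 1) ℝ)
          (Matrix.of fun _ _ => ς * nrm) (Matrix.of fun _ _ => ς * nrm)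
          (0 : Matrix (Fin 1) (Fin 1) ℝ)).det
        * (Matrix.fromBlocks 0 Z (-Z) A).det :=
    Matrix.det_fromBlocks_zero₂₁ _ _ _
  rw [h1, detM1 (ς * nrm), detM2]
  ring

end Main2
end S19P



open Stmt19 in
/-- (i) `Υ_{x,ξ'}` has the unique critical point
`P₀ = (1/ς(m_x), 0, 𝟎, 𝟎)` (for `u > 0` and `γ` small), at which it vanishes;
(ii) the Hessian at `P₀` is the stated block matrix; (iii) its determinant is
`-ς(m_x)²‖ν^φ‖²det(Z)²` and its signature is `0`; in particular `P₀` is a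
non-degenerate critical point. -/
theorem phase_critical_point_hessian (n dg : ℕ)
    (ς nrm : ℝ) (hς : 0 < ς) (hnrm : 0 < nrm)
    (Z : Matrix (Fin (2 * n)) (Fin (2 * n)) ℝ)
    (hZskew : Z.transpose = -Z) (hZinv : IsUnit Z.det)
    (a b : Fin dg → ℝ) (emb : (Fin (2 * n) → ℝ) →ₗ[ℝ] (Fin dg → ℝ))
    (R2 : (Fin (2 * n) → ℝ) → (Fin dg → ℝ))
    (hR2smooth : ContDiff ℝ (⊤ : ℕ∞) R2) (hR2zero : R2 0 = 0)
    (hR2deriv : fderiv ℝ R2 0 = 0) :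
    -- (i) `Υ(P₀) = 0` and `P₀` is the unique critical point
    phase n dg ς nrm Z a b emb R2 (P0 n ς) = 0 ∧
    (∃ U ∈ nhds (0 : Fin (2 * n) → ℝ), ∀ u s : ℝ,
      ∀ ξ'' γ : Fin (2 * n) → ℝ, 0 < u → γ ∈ U →
      (fderiv ℝ (phase n dg ς nrm Z a b emb R2) (u, s, ξ'', γ) = 0 ↔
        (u, s, ξ'', γ) = P0 n ς)) ∧
    -- (ii) the Hessian at `P₀` is the stated block matrix
    hess n (phase n dg ς nrm Z a b emb R2) (P0 n ς) =
      blockH n ς nrm Z (Ablock n dg b R2) ∧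
    -- (iii) determinant and signature; nondegeneracy
    (blockH n ς nrm Z (Ablock n dg b R2)).det = -(ς ^ 2 * nrm ^ 2 * Z.det ^ 2) ∧
    (∃ hH : (blockH n ς nrm Z (Ablock n dg b R2)).IsHermitian,
      Nat.card {i : Idx n // 0 < hH.eigenvalues i} =
        Nat.card {i : Idx n // hH.eigenvalues i < 0}) ∧
    IsUnit (blockH n ς nrm Z (Ablock n dg b R2)).det := by
  classical
  have hςne : ς ≠ 0 := ne_of_gt hς
  have hnrmne : nrm ≠ 0 := ne_of_gt hnrm
  have hzd : Z.det ≠ 0 := isUnit_iff_ne_zero.mp hZinv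
  have hdiff : Differentiable ℝ R2 := hR2smooth.differentiable (by simp)
  have hdetne : -(ς ^ 2 * nrm ^ 2 * Z.det ^ 2) ≠ (0 : ℝ) :=
    neg_ne_zero.mpr (mul_ne_zero (mul_ne_zero (pow_ne_zero 2 hςne)
      (pow_ne_zero 2 hnrmne)) (pow_ne_zero 2 hzd))
  obtain ⟨U, hU, hUprop⟩ :=
    S19P.gamma_small n dg emb hZinv hR2smooth hR2zero hR2deriv
  refine ⟨?_, ⟨U, hU, ?_⟩, ?_, ?_, ?_, ?_⟩
  · -- (i) value at P0
    simp [phase, P0, hR2zero]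
  · -- (i) uniqueness
    intro u s ξ γ hu hγU
    constructor
    · intro h
      rw [S19P.fderiv_phase n dg ς nrm Z a b emb R2 hdiff] at h
      have happ : ∀ v, S19P.Dphase n dg ς nrm Z a b emb R2 (u, s, ξ, γ) v = 0 :=
        fun v => by rw [h]; rfl
      -- s = 0
      have e1 := happ ((1 : ℝ), (0 : ℝ), 0, 0)
      rw [S19P.Dphase_apply] at e1
      simp [hnrmne, hςne] at e1
      -- γ = 0
      have hγ : γ = 0 := by
        refine hUprop γ hγU (funext fun i => ?_)
        have e3 := happ ((0 : ℝ), (0 : ℝ), Pi.single i 1, 0)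
        rw [S19P.Dphase_apply] at e3
        simp at e3
        have hvm : Matrix.vecMul γ Z i
            = dotProduct γ (Z.mulVec (Pi.single i 1)) := by
          rw [Matrix.dotProduct_mulVec, dotProduct_single, mul_one]
        rw [hvm, show Z.mulVec (Pi.single i 1) = (fun r => Z r i) from
          funext fun r => by simp [Matrix.mulVec_single]]
        have e3' : -(dotProduct γ fun r => Z r i) + dotProduct (R2 γ) (emb (Pi.single i 1)) = 0 := e3
        linarith [e3']
      -- u = 1/ς
      have e2 := happ ((0 : ℝ), (1 : ℝ), 0, 0)
      rw [S19P.Dphase_apply] at e2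
      rw [hγ] at e2
      simp [hR2zero, hR2deriv, hnrmne] at e2
      have huval : u = 1 / ς := by
        field_simp
        linarith [e2]
      -- ξ = 0
      have hξ : ξ = 0 := by
        have hZξ : Z.mulVec ξ = 0 := by
          funext l
          have e4 := happ ((0 : ℝ), (0 : ℝ), 0, Pi.single l 1)
          rw [S19P.Dphase_apply] at e4
          rw [hγ] at e4
          simp [hR2zero, hR2deriv] at e4
          simpa using e4
        have := congrArg (fun w => Z⁻¹.mulVec w) hZξ
        simpa [Matrix.mulVec_mulVec, Matrix.nonsing_inv_mul Z hZinv] using this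
      simp [P0, e1, hγ, hξ, huval]
    · rintro hP
      rw [hP, S19P.fderiv_phase n dg ς nrm Z a b emb R2 hdiff]
      exact S19P.Dphase_P0 n dg ς nrm Z a b emb hςne hR2zero hR2deriv
  · exact S19P.hess_eq_blockH n dg ς nrm a b emb hZskew hR2smooth hR2zero hR2deriv
  · exact S19P.det_blockH n ς nrm Z _
  · -- signature
    have hA : ∀ k l, Ablock n dg b R2 k l = Ablock n dg b R2 l k :=
      fun k l => S19P.Ablock_symm n dg b hR2smooth k l
    have hHerm := S19P.isHermitian_blockH n ς nrm hZskew hA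
    refine ⟨hHerm, ?_⟩
    have hdet0 : (blockH n ς nrm Z (Ablock n dg b R2)).det ≠ 0 := by
      rw [S19P.det_blockH n ς nrm Z _]
      exact hdetne
    set eIdx : (Fin 1 ⊕ Fin (2 * n)) → Idx n :=
      Sum.elim (fun _ => Sum.inl (Sum.inl 0)) (fun i => Sum.inr (Sum.inl i))
      with heIdx
    have hinj : Function.Injective eIdx := by
      rintro (x | x) (y | y) h <;> simp [heIdx] at h ⊢
      · exact Subsingleton.elim x y
      · exact h
    have hv : LinearIndependent ℝ
        (fun k : Fin 1 ⊕ Fin (2 * n) =>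
          (EuclideanSpace.single (eIdx k) (1 : ℝ))) :=
      ((EuclideanSpace.orthonormal_single (𝕜 := ℝ) (ι := Idx n)).comp eIdx
        hinj).linearIndependent
    have hiso : ∀ x ∈ Submodule.span ℝ (Set.range
        (fun k : Fin 1 ⊕ Fin (2 * n) =>
          (EuclideanSpace.single (eIdx k) (1 : ℝ)))),
        dotProduct (x : Idx n → ℝ)
          ((blockH n ς nrm Z (Ablock n dg b R2)).mulVec x) = 0 := by
      intro x hx
      have hsupp : (∀ t : Fin 1, x (Sum.inl (Sum.inr t)) = 0) ∧
          (∀ t : Fin (2 * n), x (Sum.inr (Sum.inr t)) = 0) := by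
        refine Submodule.span_induction ?_ ?_ ?_ ?_ hx
        · rintro y ⟨k, rfl⟩
          constructor <;> intro t <;> rcases k with k | k <;>
            simp [heIdx, EuclideanSpace.single_apply]
        · constructor <;> intro t <;> rfl
        · rintro y z hy hz ⟨hy1, hy2⟩ ⟨hz1, hz2⟩
          constructor <;> intro t
          · have : (y + z) (Sum.inl (Sum.inr t))
                = y (Sum.inl (Sum.inr t)) + z (Sum.inl (Sum.inr t)) := rfl
            rw [this, hy1 t, hz1 t, add_zero]
          · have : (y + z) (Sum.inr (Sum.inr t))
                = y (Sum.inr (Sum.inr t)) + z (Sum.inr (Sum.inr t)) := rfl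
            rw [this, hy2 t, hz2 t, add_zero]
        · rintro c y hy ⟨hy1, hy2⟩
          constructor <;> intro t
          · have : (c • y) (Sum.inl (Sum.inr t))
                = c * y (Sum.inl (Sum.inr t)) := rfl
            rw [this, hy1 t, mul_zero]
          · have : (c • y) (Sum.inr (Sum.inr t))
                = c * y (Sum.inr (Sum.inr t)) := rfl
            rw [this, hy2 t, mul_zero]
      obtain ⟨h1, h2⟩ := hsupp
      simp [dotProduct, Matrix.mulVec, Fintype.sum_sum_type, blockH,
        Matrix.fromBlocks, h1, h2]
    have hcard : Fintype.card (Idx n)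
        = 2 * Fintype.card (Fin 1 ⊕ Fin (2 * n)) := by
      simp
      ring
    exact S19P.balanced hHerm hdet0 _ hv hiso hcard
  · rw [S19P.det_blockH n ς nrm Z _]
    exact isUnit_iff_ne_zero.mpr hdetne
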